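/- (Pareto characterization for polymatroids, necessity direction) If (x,p) is a Pareto-optimal, budget-feasible outcome (x ∈ P, p ≤ B) for a polymatroidal environment P defined by monotone submodular f, then x([n]) = f([n]), and for any player i with p_i < B_i and any player j with v_j < v_i, there exists a set S with x(S) = f(S), i ∈ S, j ∉ S. -/

import Mathlib

/-!
Pareto optimality with transferable payments forces `x` to maximise the welfare `∑ vᵢ xᵢ`
over `P`: otherwise charging each player `vᵢ (x'ᵢ - xᵢ)` extra for a better allocation `x'` keeps
all utilities and raises revenue. For a welfare maximiser in a polymatroid, every player `i` lies
in a tight set (else raise `xᵢ`), and tight sets are closed under union by submodularity, so the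
ground set is tight. If `vⱼ < vᵢ` and no tight set separates `i` from `j`, shifting a small amount
from `xⱼ` to `xᵢ` stays in `P` when `xⱼ > 0`; when `xⱼ = 0` the set `[n] \ {j}` is tight by
monotonicity.
-/

/-- `(x, p)` is Pareto-optimal in environment `X` with values `v`. -/
def ParetoOptimal (n : ℕ) (X : Set (Fin n → ℝ)) (v : Fin n → ℝ)
    (x p : Fin n → ℝ) : Prop :=
  ¬ ∃ (x' p' : Fin n → ℝ), x' ∈ X ∧
      (∀ i, v i * x i - p i ≤ v i * x' i - p' i) ∧
      (∑ i, p i ≤ ∑ i, p' i) ∧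
      ((∃ i, v i * x i - p i < v i * x' i - p' i) ∨ ∑ i, p i < ∑ i, p' i)

open Finset

theorem ParetoOptimal.isMaxOn {n : ℕ} {X : Set (Fin n → ℝ)} {v x p : Fin n → ℝ}
    (h : ParetoOptimal n X v x p) : IsMaxOn (fun y => ∑ i, v i * y i) X x := by
  intro y hy
  by_contra hlt
  replace hlt : ∑ i, v i * x i < ∑ i, v i * y i := lt_of_not_ge hlt
  have hrevenue : ∑ i, p i < ∑ i, (p i + v i * (y i - x i)) := by
    simp only [sum_add_distrib, mul_sub, sum_sub_distrib]
    linarith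
  exact h ⟨y, fun i => p i + v i * (y i - x i), hy, fun i => le_of_eq (by ring),
    hrevenue.le, Or.inr hrevenue⟩

lemma exists_pos_forall_le_of_finite {α : Type*} [Finite α] {q : α → Prop} {g : α → ℝ}
    (h : ∀ a, q a → 0 < g a) : ∃ ε > 0, ∀ a, q a → ε ≤ g a := by
  rcases {a | q a}.eq_empty_or_nonempty with hq | hq
  · exact ⟨1, one_pos, fun a ha => (hq.subset ha).elim⟩
  · obtain ⟨a, ha, hmin⟩ := Set.exists_min_image _ g (Set.toFinite _) hq
    exact ⟨g a, h a ha, hmin⟩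

def polymatroid {ι : Type*} (f : Finset ι → ℝ) : Set (ι → ℝ) :=
  {x | (∀ i, 0 ≤ x i) ∧ ∀ S : Finset ι, ∑ i ∈ S, x i ≤ f S}

section Polymatroid

variable {ι : Type*} [DecidableEq ι] {f : Finset ι → ℝ} {x : ι → ℝ}

lemma sum_union_eq_of_sum_eq
    (hsub : ∀ S T : Finset ι, f (S ∪ T) + f (S ∩ T) ≤ f S + f T)
    (hfeas : ∀ S, ∑ k ∈ S, x k ≤ f S) {S T : Finset ι}
    (hS : ∑ k ∈ S, x k = f S) (hT : ∑ k ∈ T, x k = f T) :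
    ∑ k ∈ S ∪ T, x k = f (S ∪ T) := by
  have := sum_union_inter (s₁ := S) (s₂ := T) (f := x)
  linarith [hfeas (S ∪ T), hfeas (S ∩ T), hsub S T]

lemma sum_univ_eq_of_forall_exists_tight [Fintype ι]
    (hsub : ∀ S T : Finset ι, f (S ∪ T) + f (S ∩ T) ≤ f S + f T) (hf0 : f ∅ = 0)
    (hfeas : ∀ S, ∑ k ∈ S, x k ≤ f S) (htight : ∀ i, ∃ S, i ∈ S ∧ ∑ k ∈ S, x k = f S) :
    ∑ k, x k = f univ := by
  choose T hiT hT using htight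
  have hsup : ∀ A : Finset ι, ∑ k ∈ A.sup T, x k = f (A.sup T) := by
    intro A
    induction A using Finset.induction_on with
    | empty => simpa using hf0.symm
    | insert a A _ ih => rw [sup_insert]; exact sum_union_eq_of_sum_eq hsub hfeas (hT a) ih
  have hcover : univ.sup T = univ := eq_univ_of_forall fun i =>
    mem_of_subset (le_sup (f := T) (mem_univ i)) (hiT i)
  simpa [hcover] using hsup univ

variable [Fintype ι] {v : ι → ℝ}

lemma exists_tight_mem (hx : x ∈ polymatroid f)
    (hmax : IsMaxOn (fun y => ∑ k, v k * y k) (polymatroid f) x) {i : ι} (hv : 0 < v i) :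
    ∃ S, i ∈ S ∧ ∑ k ∈ S, x k = f S := by
  by_contra! hslack
  obtain ⟨ε, hε, hle⟩ := exists_pos_forall_le_of_finite (q := fun S => i ∈ S)
    (g := fun S => f S - ∑ k ∈ S, x k) fun S hS => sub_pos.2 ((hx.2 S).lt_of_ne (hslack S hS))
  have hmem : x + Pi.single i ε ∈ polymatroid f := by
    have hsingle : (0 : ι → ℝ) ≤ Pi.single i ε := Pi.single_nonneg.2 hε.le
    refine ⟨fun k => add_nonneg (hx.1 k) (hsingle k), fun S => ?_⟩
    rw [Pi.add_def, sum_add_distrib, sum_pi_single']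
    split_ifs with hS
    · linarith [hle S hS]
    · simpa using hx.2 S
  have hgain : ∑ k, v k * (x + Pi.single i ε : ι → ℝ) k ≤ ∑ k, v k * x k := hmax hmem
  simp only [Pi.add_apply, mul_add, sum_add_distrib, Pi.single_apply,
    mul_ite, mul_zero, sum_ite_eq', mem_univ, if_true] at hgain
  linarith [mul_pos hv hε]

lemma exists_tight_mem_not_mem (hx : x ∈ polymatroid f)
    (hmax : IsMaxOn (fun y => ∑ k, v k * y k) (polymatroid f) x) {i j : ι} (hv : v j < v i)
    (hxj : 0 < x j) : ∃ S, ∑ k ∈ S, x k = f S ∧ i ∈ S ∧ j ∉ S := by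
  by_contra! hslack
  have hij : i ≠ j := ne_of_apply_ne v hv.ne'
  obtain ⟨δ, hδ, hle⟩ := exists_pos_forall_le_of_finite (q := fun S => i ∈ S ∧ j ∉ S)
    (g := fun S => f S - ∑ k ∈ S, x k)
    fun S hS => sub_pos.2 ((hx.2 S).lt_of_ne fun h => hS.2 (hslack S h hS.1))
  set ε := min (x j) δ
  have hε : 0 < ε := lt_min hxj hδ
  have hmem : x + Pi.single i ε - Pi.single j ε ∈ polymatroid f := by
    have hsingle : (0 : ι → ℝ) ≤ Pi.single i ε := Pi.single_nonneg.2 hε.le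
    refine ⟨fun k => ?_, fun S => ?_⟩
    · rcases eq_or_ne k j with rfl | hkj
      · simp [hij, ε]
      · rw [Pi.sub_apply, Pi.single_eq_of_ne hkj, sub_zero]
        exact add_nonneg (hx.1 k) (hsingle k)
    · simp only [Pi.add_apply, Pi.sub_apply, sum_add_distrib, sum_sub_distrib, sum_pi_single']
      have := hx.2 S
      split_ifs with hiS hjS hjS
      · linarith
      · linarith [hle S ⟨hiS, hjS⟩, min_le_right (x j) δ]
      · linarith
      · linarith
  have hgain : ∑ k, v k * (x + Pi.single i ε - Pi.single j ε : ι → ℝ) k ≤ ∑ k, v k * x k :=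
    hmax hmem
  simp only [Pi.add_apply, Pi.sub_apply, mul_add, mul_sub, sum_add_distrib,
    sum_sub_distrib, Pi.single_apply, mul_ite, mul_zero, sum_ite_eq', mem_univ, if_true] at hgain
  linarith [mul_pos (sub_pos.2 hv) hε]

lemma sum_erase_eq_of_eq_zero (hmono : Monotone f) (hfeas : ∀ S, ∑ k ∈ S, x k ≤ f S)
    (huniv : ∑ k, x k = f univ) {j : ι} (hxj : x j = 0) :
    ∑ k ∈ univ.erase j, x k = f (univ.erase j) := by
  have hsum : ∑ k ∈ univ.erase j, x k = ∑ k, x k := by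
    rw [sum_erase_eq_sub (mem_univ j), hxj, sub_zero]
  linarith [hfeas (univ.erase j), hmono (erase_subset j univ)]

end Polymatroid

theorem pareto_polymatroid_necessity_general (n : ℕ) (f : Finset (Fin n) → ℝ)
    (hmono : ∀ S T : Finset (Fin n), S ⊆ T → f S ≤ f T)
    (hsub : ∀ S T : Finset (Fin n), f (S ∪ T) + f (S ∩ T) ≤ f S + f T)
    (hf0 : f ∅ = 0)
    (P : Set (Fin n → ℝ))
    (hP : P = {x | (∀ i, 0 ≤ x i) ∧ ∀ S : Finset (Fin n), ∑ i ∈ S, x i ≤ f S})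
    (v : Fin n → ℝ) (hv : ∀ i, 0 < v i)
    (B : Fin n → ℝ)
    (x p : Fin n → ℝ) (hx : x ∈ P)
    (hpareto : ParetoOptimal n P v x p) :
    (∑ i, x i = f Finset.univ) ∧
      ∀ i j : Fin n, p i < B i → v j < v i →
        ∃ S : Finset (Fin n), (∑ k ∈ S, x k = f S) ∧ i ∈ S ∧ j ∉ S := by
  change P = polymatroid f at hP
  subst hP
  have hmax := hpareto.isMaxOn
  have huniv : ∑ i, x i = f univ :=
    sum_univ_eq_of_forall_exists_tight hsub hf0 hx.2 fun i => exists_tight_mem hx hmax (hv i)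
  refine ⟨huniv, fun i j _ hvij => ?_⟩
  rcases (hx.1 j).eq_or_lt with hxj | hxj
  · exact ⟨univ.erase j, sum_erase_eq_of_eq_zero (fun S T => hmono S T) hx.2 huniv hxj.symm,
      mem_erase.2 ⟨ne_of_apply_ne v hvij.ne', mem_univ i⟩, notMem_erase j univ⟩
  · exact exists_tight_mem_not_mem hx hmax hvij hxj

theorem pareto_polymatroid_necessity (n : ℕ) (f : Finset (Fin n) → ℝ)
    (hmono : ∀ S T : Finset (Fin n), S ⊆ T → f S ≤ f T)
    (hsub : ∀ S T : Finset (Fin n), f (S ∪ T) + f (S ∩ T) ≤ f S + f T)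
    (hf0 : f ∅ = 0)
    (P : Set (Fin n → ℝ))
    (hP : P = {x | (∀ i, 0 ≤ x i) ∧ ∀ S : Finset (Fin n), ∑ i ∈ S, x i ≤ f S})
    (v : Fin n → ℝ) (hv : ∀ i, 0 < v i)
    (B : Fin n → ℝ) (hB : ∀ i, 0 ≤ B i)
    (x p : Fin n → ℝ) (hx : x ∈ P) (hp : ∀ i, p i ≤ B i)
    (hpareto : ParetoOptimal n P v x p) :
    (∑ i, x i = f Finset.univ) ∧
      ∀ i j : Fin n, p i < B i → v j < v i →
        ∃ S : Finset (Fin n), (∑ k ∈ S, x k = f S) ∧ i ∈ S ∧ j ∉ S :=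
  pareto_polymatroid_necessity_general n f hmono hsub hf0 P hP v hv B x p hx hpareto
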